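/- arXiv:2005.13657 — 4 statements merged into one kernel-verified Lean document; each statement's English description precedes it below -/
import Mathlib

section
/- Let a < b be real numbers, let z : [a,b] → ℝ be continuous on [a,b] and differentiable on (a,b) with |z(x)| ≤ 1 for all x ∈ [a,b], and let g : (a,b) → ℝ be continuous with z'(x) = -g(x) and g(x) ≥ 2/(b-a) for every x ∈ (a,b). Then g(x) = 2/(b-a) for every x ∈ (a,b). -/
/-!
With `c = 2 / (b - a)`, the function `w = z + c (x - a)` has `w' = c - g ≤ 0`, so it is
antitone on `[a, b]`. The bound `|z| ≤ 1` gives `w a = z a ≤ 1 ≤ z b + 2 = w b`, so `w` must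
be constant, and hence `g = c` on `(a, b)`.
-/

open Set

theorem AntitoneOn.eq_left_of_le_of_mem_Icc {α β : Type*} [Preorder α] [PartialOrder β]
    {f : α → β} {a b x : α} (hf : AntitoneOn f (Icc a b)) (hle : f a ≤ f b)
    (hx : x ∈ Icc a b) : f x = f a :=
  have hab : a ≤ b := hx.1.trans hx.2
  le_antisymm (hf (left_mem_Icc.2 hab) hx hx.1)
    (hle.trans (hf hx (right_mem_Icc.2 hab) hx.2))

theorem eq_zero_of_hasDerivAt_nonpos_of_le {f f' : ℝ → ℝ} {a b : ℝ}
    (hfc : ContinuousOn f (Icc a b)) (hf : ∀ x ∈ Ioo a b, HasDerivAt f (f' x) x)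
    (hf'_nonpos : ∀ x ∈ Ioo a b, f' x ≤ 0) (hle : f a ≤ f b) :
    ∀ x ∈ Ioo a b, f' x = 0 := by
  have hanti : AntitoneOn f (Icc a b) := by
    refine antitoneOn_of_hasDerivWithinAt_nonpos (f' := f') (convex_Icc a b) hfc ?_ ?_
    · rw [interior_Icc]
      exact fun x hx => (hf x hx).hasDerivWithinAt
    · rwa [interior_Icc]
  intro x hx
  have hconst : f =ᶠ[nhds x] fun _ => f a := by
    filter_upwards [Ioo_mem_nhds hx.1 hx.2] with y hy
    exact hanti.eq_left_of_le_of_mem_Icc hle (Ioo_subset_Icc_self hy)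
  exact (hf x hx).unique ((hasDerivAt_const x (f a)).congr_of_eventuallyEq hconst)

theorem gelfand_one_dim_rigidity_general (a b : ℝ) (hab : a < b) (z g : ℝ → ℝ)
    (hzc : ContinuousOn z (Set.Icc a b))
    (hzb : ∀ x ∈ Set.Icc a b, |z x| ≤ 1)
    (hderiv : ∀ x ∈ Set.Ioo a b, HasDerivAt z (-(g x)) x)
    (hg : ∀ x ∈ Set.Ioo a b, 2 / (b - a) ≤ g x) :
    ∀ x ∈ Set.Ioo a b, g x = 2 / (b - a) := by
  set c := 2 / (b - a)
  have hc : c * (b - a) = 2 := div_mul_cancel₀ 2 (sub_pos.2 hab).ne'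
  let w : ℝ → ℝ := fun x => z x + c * (x - a)
  have hw : ∀ x ∈ Ioo a b, HasDerivAt w (c - g x) x := fun x hx => by
    rw [← neg_add_eq_sub]
    exact (hderiv x hx).add
      (((hasDerivAt_id' x).sub_const a).const_mul c |>.congr_deriv (mul_one c))
  have hwc : ContinuousOn w (Icc a b) := hzc.add (by fun_prop)
  have hle : w a ≤ w b := by
    have hza_le := (abs_le.1 (hzb a (left_mem_Icc.2 hab.le))).2
    have hzb_ge := (abs_le.1 (hzb b (right_mem_Icc.2 hab.le))).1
    simp only [w, sub_self, mul_zero, add_zero, hc]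
    linarith
  have hw'_zero :=
    eq_zero_of_hasDerivAt_nonpos_of_le hwc hw (fun y hy => sub_nonpos.2 (hg y hy)) hle
  exact fun x hx => (sub_eq_zero.1 (hw'_zero x hx)).symm

/-- Rigidity at the critical parameter: if `z` is continuous on `[a,b]`, differentiable
on `(a,b)` with `|z| ≤ 1` on `[a,b]`, and `z' = -g` on `(a,b)` for a continuous `g`
with `g ≥ 2/(b-a)`, then `g ≡ 2/(b-a)` on `(a,b)`. -/
theorem gelfand_one_dim_rigidity (a b : ℝ) (hab : a < b) (z g : ℝ → ℝ)
    (hzc : ContinuousOn z (Set.Icc a b))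
    (hzb : ∀ x ∈ Set.Icc a b, |z x| ≤ 1)
    (hderiv : ∀ x ∈ Set.Ioo a b, HasDerivAt z (-(g x)) x)
    (hgc : ContinuousOn g (Set.Ioo a b))
    (hg : ∀ x ∈ Set.Ioo a b, 2 / (b - a) ≤ g x) :
    ∀ x ∈ Set.Ioo a b, g x = 2 / (b - a) :=
  gelfand_one_dim_rigidity_general a b hab z g hzc hzb hderiv hg
end

section
/- Let N ≥ 2 be a natural number and 0 < ρ < 1. Define z : ℝ^N → ℝ^N by z(x) = -(1/ρ)·x if ‖x‖ ≤ ρ and z(x) = -x/‖x‖ if ‖x‖ > ρ, and define g : ℝ^N → ℝ by g(x) = N/ρ if ‖x‖ ≤ ρ and g(x) = (N-1)/‖x‖ if ‖x‖ > ρ. Then for every smooth compactly supported function φ : ℝ^N → ℝ one has ∫_{ℝ^N} ⟨ z(x) , ∇φ(x) ⟩ dx = ∫_{ℝ^N} g(x)·φ(x) dx. -/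
open scoped RealInnerProductSpace
open MeasureTheory
open Set Metric intervalIntegral

section Helpers

lemma polar_integral {N : ℕ} (hN : 1 ≤ N) (f : EuclideanSpace ℝ (Fin N) → ℝ) :
    ∫ x : EuclideanSpace ℝ (Fin N), f x =
      ∫ p : sphere (0 : EuclideanSpace ℝ (Fin N)) 1 × Ioi (0 : ℝ),
        f ((p.2 : ℝ) • (p.1 : EuclideanSpace ℝ (Fin N)))
        ∂((volume : Measure (EuclideanSpace ℝ (Fin N))).toSphere.prod
            (Measure.volumeIoiPow (N - 1))) := by
  haveI : Nontrivial (EuclideanSpace ℝ (Fin N)) := by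
    apply Module.nontrivial_of_finrank_pos (R := ℝ)
    rw [finrank_euclideanSpace_fin]; omega
  have hdim : Module.finrank ℝ (EuclideanSpace ℝ (Fin N)) = N := finrank_euclideanSpace_fin
  have h1 : ∫ x : EuclideanSpace ℝ (Fin N), f x =
      ∫ x : ({0}ᶜ : Set (EuclideanSpace ℝ (Fin N))), f x.1
        ∂((volume : Measure (EuclideanSpace ℝ (Fin N))).comap (↑)) := by
    rw [integral_subtype_comap (measurableSet_singleton _).compl fun x ↦ f x,
      MeasureTheory.restrict_compl_singleton]
  rw [h1]
  have := ((volume : Measure (EuclideanSpace ℝ (Fin N))).measurePreserving_homeomorphUnitSphereProd).integral_comp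
      (Homeomorph.measurableEmbedding _)
      (fun p : sphere (0 : EuclideanSpace ℝ (Fin N)) 1 × Ioi (0 : ℝ) ↦
        f ((p.2 : ℝ) • (p.1 : EuclideanSpace ℝ (Fin N))))
  rw [hdim] at this
  rw [← this]
  refine integral_congr_ae (Filter.Eventually.of_forall fun x ↦ ?_)
  simp [homeomorphUnitSphereProd, smul_inv_smul₀ (norm_ne_zero_iff.2 x.2)]

lemma volumeIoiPow_integral (n : ℕ) (F : ℝ → ℝ) :
    ∫ x : Ioi (0 : ℝ), F x.1 ∂(Measure.volumeIoiPow n) = ∫ r in Ioi (0 : ℝ), r ^ n * F r := by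
  simp only [Measure.volumeIoiPow, ENNReal.ofReal]
  rw [integral_withDensity_eq_integral_smul
      ((measurable_subtype_coe.pow_const _).real_toNNReal) fun x : Ioi (0:ℝ) ↦ F x.1,
    integral_subtype_comap measurableSet_Ioi fun a : ℝ ↦ Real.toNNReal (a ^ n) • F a]
  refine setIntegral_congr_fun measurableSet_Ioi fun x hx ↦ ?_
  rw [NNReal.smul_def, Real.coe_toNNReal _ (pow_nonneg hx.out.le _), smul_eq_mul]

lemma oneD (N : ℕ) (hN : 2 ≤ N) (ρ R : ℝ) (hρ0 : 0 < ρ) (hρR : ρ < R)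
    (ψ ψ' : ℝ → ℝ) (hψ : ∀ r, HasDerivAt ψ (ψ' r) r)
    (hψc : Continuous ψ) (hψ'c : Continuous ψ')
    (hRψ : ∀ r, R ≤ r → ψ r = 0) (hRψ' : ∀ r, R ≤ r → ψ' r = 0) :
    ∫ r in Ioi (0:ℝ), r ^ (N-1) * (-(if r ≤ ρ then r/ρ else 1) * ψ' r)
      = ∫ r in Ioi (0:ℝ), r ^ (N-1) * ((if r ≤ ρ then (N:ℝ)/ρ else ((N:ℝ)-1)/r) * ψ r) := by
  have hρR' : (0:ℝ) < R := hρ0.trans hρR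
  have hN1 : N - 1 + 1 = N := by omega
  have hN2 : N - 1 - 1 + 1 = N - 1 := by omega
  set u : ℝ → ℝ := fun r => r ^ N / ρ with hu_def
  set u' : ℝ → ℝ := fun r => (N : ℝ) * r ^ (N-1) / ρ with hu'_def
  set w : ℝ → ℝ := fun r => r ^ (N-1) with hw_def
  set w' : ℝ → ℝ := fun r => ((N - 1 : ℕ) : ℝ) * r ^ (N-1-1) with hw'_def
  have hu : ∀ x, HasDerivAt u (u' x) x := fun x => (hasDerivAt_pow N x).div_const ρ
  have hw : ∀ x, HasDerivAt w (w' x) x := fun x => hasDerivAt_pow (N-1) x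
  have huc : Continuous u := by fun_prop
  have hu'c : Continuous u' := by fun_prop
  have hwc : Continuous w := by fun_prop
  have hw'c : Continuous w' := by fun_prop
  have hpow : ∀ r : ℝ, r ^ (N-1) * r = r ^ N := fun r => by rw [← pow_succ, hN1]
  have hpow2 : ∀ r : ℝ, r ^ (N-1-1) * r = r ^ (N-1) := fun r => by rw [← pow_succ, hN2]
  have split : ∀ f : ℝ → ℝ, (∀ r, R ≤ r → f r = 0) → IntegrableOn f (Ioc 0 ρ)
      → IntegrableOn f (Ioc ρ R) →
      ∫ r in Ioi (0:ℝ), f r = (∫ r in Ioc 0 ρ, f r) + ∫ r in Ioc ρ R, f r := by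
    intro f hf0 h1 h2
    have e1 : Ioc (0:ℝ) R ∪ Ioi R = Ioi 0 := Ioc_union_Ioi_eq_Ioi hρR'.le
    have e2 : Ioc (0:ℝ) ρ ∪ Ioc ρ R = Ioc 0 R := Ioc_union_Ioc_eq_Ioc hρ0.le hρR.le
    rw [← e1, setIntegral_union (Ioc_disjoint_Ioi le_rfl) measurableSet_Ioi, ← e2,
      setIntegral_union (Set.Ioc_disjoint_Ioc_of_le le_rfl) measurableSet_Ioc h1 h2]
    · rw [setIntegral_congr_fun measurableSet_Ioi (fun x hx => hf0 x (le_of_lt hx)),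
        MeasureTheory.integral_zero, add_zero]
    · rw [← e2]; exact h1.union h2
    · exact (integrableOn_congr_fun (fun x hx => hf0 x (le_of_lt hx))
        measurableSet_Ioi).2 integrableOn_zero
  have eqA1 : EqOn (fun r : ℝ => r ^ (N-1) * (-(if r ≤ ρ then r/ρ else 1) * ψ' r))
      (fun r => -(u r * ψ' r)) (Ioc 0 ρ) := by
    intro r hr
    simp only [if_pos hr.2, hu_def]
    rw [← hpow r]; ring
  have eqA2 : EqOn (fun r : ℝ => r ^ (N-1) * (-(if r ≤ ρ then r/ρ else 1) * ψ' r))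
      (fun r => -(w r * ψ' r)) (Ioc ρ R) := by
    intro r hr
    simp only [if_neg (not_le.2 hr.1), hw_def]
    ring
  have eqB1 : EqOn (fun r : ℝ => r ^ (N-1) * ((if r ≤ ρ then (N:ℝ)/ρ else ((N:ℝ)-1)/r) * ψ r))
      (fun r => u' r * ψ r) (Ioc 0 ρ) := by
    intro r hr
    simp only [if_pos hr.2, hu'_def]
    ring
  have eqB2 : EqOn (fun r : ℝ => r ^ (N-1) * ((if r ≤ ρ then (N:ℝ)/ρ else ((N:ℝ)-1)/r) * ψ r))
      (fun r => w' r * ψ r) (Ioc ρ R) := by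
    intro r hr
    have hr0 : (0:ℝ) < r := hρ0.trans hr.1
    simp only [if_neg (not_le.2 hr.1), hw'_def]
    rw [Nat.cast_sub (by omega : 1 ≤ N), Nat.cast_one, ← hpow2 r]
    field_simp
  have iA1 : IntegrableOn (fun r : ℝ => r ^ (N-1) * (-(if r ≤ ρ then r/ρ else 1) * ψ' r))
      (Ioc 0 ρ) :=
    ((by fun_prop : Continuous fun r : ℝ => -(u r * ψ' r)).integrableOn_Ioc).congr_fun
      eqA1.symm measurableSet_Ioc
  have iA2 : IntegrableOn (fun r : ℝ => r ^ (N-1) * (-(if r ≤ ρ then r/ρ else 1) * ψ' r))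
      (Ioc ρ R) :=
    ((by fun_prop : Continuous fun r : ℝ => -(w r * ψ' r)).integrableOn_Ioc).congr_fun
      eqA2.symm measurableSet_Ioc
  have iB1 : IntegrableOn
      (fun r : ℝ => r ^ (N-1) * ((if r ≤ ρ then (N:ℝ)/ρ else ((N:ℝ)-1)/r) * ψ r)) (Ioc 0 ρ) :=
    ((by fun_prop : Continuous fun r : ℝ => u' r * ψ r).integrableOn_Ioc).congr_fun
      eqB1.symm measurableSet_Ioc
  have iB2 : IntegrableOn
      (fun r : ℝ => r ^ (N-1) * ((if r ≤ ρ then (N:ℝ)/ρ else ((N:ℝ)-1)/r) * ψ r)) (Ioc ρ R) :=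
    ((by fun_prop : Continuous fun r : ℝ => w' r * ψ r).integrableOn_Ioc).congr_fun
      eqB2.symm measurableSet_Ioc
  rw [split _ (fun r hr => by rw [hRψ' r hr]; ring) iA1 iA2,
      split _ (fun r hr => by rw [hRψ r hr]; ring) iB1 iB2,
      setIntegral_congr_fun measurableSet_Ioc eqA1, setIntegral_congr_fun measurableSet_Ioc eqA2,
      setIntegral_congr_fun measurableSet_Ioc eqB1, setIntegral_congr_fun measurableSet_Ioc eqB2,
      ← intervalIntegral.integral_of_le hρ0.le, ← intervalIntegral.integral_of_le hρR.le,
      ← intervalIntegral.integral_of_le hρ0.le, ← intervalIntegral.integral_of_le hρR.le]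
  have ibp1 := intervalIntegral.integral_mul_deriv_eq_deriv_mul
    (u := u) (v := ψ) (u' := u') (v' := ψ') (a := (0:ℝ)) (b := ρ)
    (fun x _ => hu x) (fun x _ => hψ x)
    (hu'c.intervalIntegrable _ _) (hψ'c.intervalIntegrable _ _)
  have ibp2 := intervalIntegral.integral_mul_deriv_eq_deriv_mul
    (u := w) (v := ψ) (u' := w') (v' := ψ') (a := ρ) (b := R)
    (fun x _ => hw x) (fun x _ => hψ x)
    (hw'c.intervalIntegrable _ _) (hψ'c.intervalIntegrable _ _)
  rw [intervalIntegral.integral_neg, intervalIntegral.integral_neg, ibp1, ibp2]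
  have h0 : u 0 = 0 := by simp [hu_def, zero_pow (by omega : N ≠ 0)]
  have hR0 : ψ R = 0 := hRψ R le_rfl
  have huw : u ρ = w ρ := by
    simp only [hu_def, hw_def]
    rw [← hpow ρ, mul_div_assoc, div_self hρ0.ne', mul_one]
  rw [h0, hR0, huw]
  ring

end Helpers

/-- Distributional identity `-div z = g` on `ℝ^N` (`N ≥ 2`) for the continuous vector field
`z x = -(1/ρ) x` on `‖x‖ ≤ ρ`, `z x = -x/‖x‖` on `‖x‖ > ρ`, with
`g x = N/ρ` on `‖x‖ ≤ ρ` and `g x = (N-1)/‖x‖` on `‖x‖ > ρ`. -/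
theorem distributional_divergence_radial_piecewise (N : ℕ) (hN : 2 ≤ N)
    (ρ : ℝ) (hρ0 : 0 < ρ) (hρ1 : ρ < 1)
    (z : EuclideanSpace ℝ (Fin N) → EuclideanSpace ℝ (Fin N))
    (hz : ∀ x, z x = if ‖x‖ ≤ ρ then -(1 / ρ) • x else -(1 / ‖x‖) • x)
    (g : EuclideanSpace ℝ (Fin N) → ℝ)
    (hg : ∀ x, g x = if ‖x‖ ≤ ρ then (N : ℝ) / ρ else ((N : ℝ) - 1) / ‖x‖)
    (φ : EuclideanSpace ℝ (Fin N) → ℝ)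
    (hφ : ContDiff ℝ (⊤ : ℕ∞) φ) (hsupp : HasCompactSupport φ) :
    ∫ x : EuclideanSpace ℝ (Fin N), ⟪z x, gradient φ x⟫ =
      ∫ x : EuclideanSpace ℝ (Fin N), g x * φ x := by
  classical
  have hN1 : 1 ≤ N := by omega
  -- gradient facts
  have hgradc : Continuous (gradient φ) :=
    (InnerProductSpace.toDual ℝ (EuclideanSpace ℝ (Fin N))).symm.continuous.comp
      (hφ.continuous_fderiv (by simp))
  have hgrad0 : ∀ x, x ∉ tsupport φ → gradient φ x = 0 := by
    intro x hx
    have h2 : φ =ᶠ[nhds x] 0 := notMem_tsupport_iff_eventuallyEq.mp hx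
    have h1 : fderiv ℝ φ x = 0 := by
      rw [h2.fderiv_eq]; exact fderiv_const_apply 0
    rw [gradient, h1, map_zero]
  have hφc := hφ.continuous
  obtain ⟨R₀, hR₀⟩ := hsupp.isBounded.subset_closedBall 0
  set R : ℝ := max R₀ ρ + 1 with hR_def
  have hρR : ρ < R := lt_of_le_of_lt (le_max_right _ _) (lt_add_one _)
  have hR0' : (0:ℝ) < R := hρ0.trans hρR
  have hout : ∀ x : EuclideanSpace ℝ (Fin N), R ≤ ‖x‖ → x ∉ tsupport φ := by
    intro x hx hmem
    have h1 := hR₀ hmem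
    rw [Metric.mem_closedBall, dist_zero_right] at h1
    have : R₀ < R := lt_of_le_of_lt (le_max_left _ _) (lt_add_one _)
    linarith
  have hφ0 : ∀ x, R ≤ ‖x‖ → φ x = 0 := fun x hx =>
    image_eq_zero_of_notMem_tsupport (hout x hx)
  have hg0 : ∀ x, R ≤ ‖x‖ → gradient φ x = 0 := fun x hx => hgrad0 x (hout x hx)
  -- bounds
  have hgs : HasCompactSupport (gradient φ) := HasCompactSupport.intro hsupp hgrad0
  obtain ⟨D, hD⟩ := hgs.exists_bound_of_continuous hgradc
  obtain ⟨Cφ, hCφ⟩ := hsupp.exists_bound_of_continuous hφc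
  have hzb : ∀ x : EuclideanSpace ℝ (Fin N), ‖z x‖ ≤ 1 := by
    intro x
    rw [hz]
    split_ifs with h
    · rw [norm_smul, norm_neg, Real.norm_of_nonneg (by positivity)]
      calc (1/ρ) * ‖x‖ ≤ (1/ρ) * ρ := by gcongr
        _ = 1 := by field_simp
    · have hx0 : (0:ℝ) < ‖x‖ := hρ0.trans (not_le.1 h)
      rw [norm_smul, norm_neg, Real.norm_of_nonneg (by positivity), one_div,
        inv_mul_cancel₀ hx0.ne']
  have hgb : ∀ x : EuclideanSpace ℝ (Fin N), ‖g x‖ ≤ (N:ℝ)/ρ := by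
    intro x
    have h2N : (2:ℝ) ≤ (N:ℝ) := by exact_mod_cast hN
    rw [hg]
    split_ifs with h
    · rw [Real.norm_of_nonneg (div_nonneg (by positivity) hρ0.le)]
    · have hx0 : ρ < ‖x‖ := not_le.1 h
      rw [Real.norm_of_nonneg (div_nonneg (by linarith) (norm_nonneg _))]
      calc ((N:ℝ)-1)/‖x‖ ≤ ((N:ℝ)-1)/ρ := by gcongr; linarith
        _ ≤ (N:ℝ)/ρ := by gcongr; linarith
  -- measurability
  have hzm : Measurable z := by
    rw [funext hz]
    exact Measurable.ite (measurableSet_le measurable_norm measurable_const)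
      (by fun_prop) (by fun_prop)
  have hgm : Measurable g := by
    rw [funext hg]
    exact Measurable.ite (measurableSet_le measurable_norm measurable_const)
      measurable_const (measurable_const.div measurable_norm)
  -- polar coordinates
  rw [polar_integral hN1 (fun x => ⟪z x, gradient φ x⟫),
      polar_integral hN1 (fun x => g x * φ x)]
  set P := ((volume : Measure (EuclideanSpace ℝ (Fin N))).toSphere.prod
      (Measure.volumeIoiPow (N - 1))) with hP
  have intlem : ∀ (F : sphere (0 : EuclideanSpace ℝ (Fin N)) 1 × Ioi (0:ℝ) → ℝ) (C : ℝ),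
      Measurable F → (∀ p, ‖F p‖ ≤ C) → (∀ p, R < (p.2:ℝ) → F p = 0) → Integrable F P := by
    intro F C hFm hFb hF0
    have hfin : P (Set.univ ×ˢ {r : Ioi (0:ℝ) | (r:ℝ) ≤ R}) ≠ ⊤ := by
      rw [hP, Measure.prod_prod]
      have h1 : (Measure.volumeIoiPow (N-1)) {r : Ioi (0:ℝ) | (r:ℝ) ≤ R}
          ≤ Measure.volumeIoiPow (N-1) (Set.Iio ⟨R+1, Set.mem_Ioi.2 (by linarith)⟩) := by
        refine measure_mono fun r hr => ?_
        simp only [Set.mem_Iio, ← Subtype.coe_lt_coe]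
        have : (r:ℝ) ≤ R := hr
        linarith
      refine ENNReal.mul_ne_top (measure_ne_top _ _) (lt_of_le_of_lt h1 ?_).ne
      rw [Measure.volumeIoiPow_apply_Iio]
      exact ENNReal.ofReal_lt_top
    have hsupp' : Function.support F ⊆ Set.univ ×ˢ {r : Ioi (0:ℝ) | (r:ℝ) ≤ R} := by
      intro p hp
      refine ⟨Set.mem_univ _, ?_⟩
      by_contra h
      exact hp (hF0 p (not_le.1 h))
    rw [← integrableOn_iff_integrable_of_support_subset hsupp']
    exact Measure.integrableOn_of_bounded hfin hFm.aestronglyMeasurable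
      (Filter.Eventually.of_forall fun p => hFb p)
  have hsm : Measurable (fun p : sphere (0 : EuclideanSpace ℝ (Fin N)) 1 × Ioi (0:ℝ) =>
      (p.2 : ℝ) • (p.1 : EuclideanSpace ℝ (Fin N))) :=
    ((continuous_subtype_val.comp continuous_snd).smul
      (continuous_subtype_val.comp continuous_fst)).measurable
  have hnormp : ∀ p : sphere (0 : EuclideanSpace ℝ (Fin N)) 1 × Ioi (0:ℝ),
      ‖(p.2 : ℝ) • (p.1 : EuclideanSpace ℝ (Fin N))‖ = (p.2 : ℝ) := by
    intro p
    rw [norm_smul, mem_sphere_zero_iff_norm.mp p.1.2, mul_one, Real.norm_of_nonneg p.2.2.out.le]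
  have hI1 : Integrable (fun p : sphere (0 : EuclideanSpace ℝ (Fin N)) 1 × Ioi (0:ℝ) =>
      ⟪z ((p.2 : ℝ) • (p.1 : EuclideanSpace ℝ (Fin N))),
        gradient φ ((p.2 : ℝ) • (p.1 : EuclideanSpace ℝ (Fin N)))⟫) P := by
    refine intlem _ D ((hzm.inner hgradc.measurable).comp hsm) (fun p => ?_) (fun p hp => ?_)
    · calc ‖⟪z _, gradient φ _⟫‖ ≤ ‖z _‖ * ‖gradient φ _‖ := norm_inner_le_norm _ _
        _ ≤ 1 * D := by
            have := hD ((p.2 : ℝ) • (p.1 : EuclideanSpace ℝ (Fin N)))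
            exact mul_le_mul (hzb _) this (norm_nonneg _) zero_le_one
        _ = D := one_mul D
    · rw [hg0 _ (by rw [hnormp p]; linarith), inner_zero_right]
  have hI2 : Integrable (fun p : sphere (0 : EuclideanSpace ℝ (Fin N)) 1 × Ioi (0:ℝ) =>
      g ((p.2 : ℝ) • (p.1 : EuclideanSpace ℝ (Fin N))) *
        φ ((p.2 : ℝ) • (p.1 : EuclideanSpace ℝ (Fin N)))) P := by
    refine intlem _ ((N:ℝ)/ρ * Cφ) ((hgm.comp hsm).mul (hφc.measurable.comp hsm))
      (fun p => ?_) (fun p hp => ?_)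
    · rw [norm_mul]
      exact mul_le_mul (hgb _) (hCφ _) (norm_nonneg _) (by positivity)
    · rw [hφ0 _ (by rw [hnormp p]; linarith), mul_zero]
  rw [MeasureTheory.integral_prod _ hI1, MeasureTheory.integral_prod _ hI2]
  refine integral_congr_ae (Filter.Eventually.of_forall fun ω => ?_)
  -- fixed direction ω
  have hω : ‖(ω : EuclideanSpace ℝ (Fin N))‖ = 1 := mem_sphere_zero_iff_norm.mp ω.2
  have hnorm : ∀ r : ℝ, 0 < r → ‖r • (ω : EuclideanSpace ℝ (Fin N))‖ = r := by
    intro r hr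
    rw [norm_smul, hω, mul_one, Real.norm_of_nonneg hr.le]
  show (∫ y : Ioi (0:ℝ), ⟪z ((y:ℝ) • (ω : EuclideanSpace ℝ (Fin N))),
        gradient φ ((y:ℝ) • (ω : EuclideanSpace ℝ (Fin N)))⟫ ∂(Measure.volumeIoiPow (N-1)))
      = ∫ y : Ioi (0:ℝ), g ((y:ℝ) • (ω : EuclideanSpace ℝ (Fin N))) *
        φ ((y:ℝ) • (ω : EuclideanSpace ℝ (Fin N))) ∂(Measure.volumeIoiPow (N-1))
  rw [volumeIoiPow_integral (N-1) (fun t => ⟪z (t • (ω : EuclideanSpace ℝ (Fin N))),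
        gradient φ (t • (ω : EuclideanSpace ℝ (Fin N)))⟫),
      volumeIoiPow_integral (N-1) (fun t => g (t • (ω : EuclideanSpace ℝ (Fin N))) *
        φ (t • (ω : EuclideanSpace ℝ (Fin N))))]
  -- derivative facts for ψ
  have hψd : ∀ r : ℝ, HasDerivAt (fun t : ℝ => φ (t • (ω : EuclideanSpace ℝ (Fin N))))
      (⟪gradient φ (r • (ω : EuclideanSpace ℝ (Fin N))), (ω : EuclideanSpace ℝ (Fin N))⟫) r := by
    intro r
    have h1 : HasDerivAt (fun t : ℝ => t • (ω : EuclideanSpace ℝ (Fin N)))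
        ((ω : EuclideanSpace ℝ (Fin N))) r := by
      simpa using (hasDerivAt_id r).smul_const (ω : EuclideanSpace ℝ (Fin N))
    have h2 := ((hφ.differentiable (by simp)) (r • (ω : EuclideanSpace ℝ (Fin N)))).hasFDerivAt
    have h3 := h2.comp_hasDerivAt r h1
    have h4 : ⟪gradient φ (r • (ω : EuclideanSpace ℝ (Fin N))), (ω : EuclideanSpace ℝ (Fin N))⟫
        = fderiv ℝ φ (r • (ω : EuclideanSpace ℝ (Fin N))) (ω : EuclideanSpace ℝ (Fin N)) := by
      rw [gradient]; exact InnerProductSpace.toDual_symm_apply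
    rw [h4]
    exact h3
  have hL : ∫ r in Ioi (0:ℝ), r ^ (N-1) * ⟪z (r • (ω : EuclideanSpace ℝ (Fin N))),
        gradient φ (r • (ω : EuclideanSpace ℝ (Fin N)))⟫
      = ∫ r in Ioi (0:ℝ), r ^ (N-1) * (-(if r ≤ ρ then r/ρ else 1) *
          ⟪gradient φ (r • (ω : EuclideanSpace ℝ (Fin N))), (ω : EuclideanSpace ℝ (Fin N))⟫) := by
    refine setIntegral_congr_fun measurableSet_Ioi fun r hr => ?_
    have hr0 : (0:ℝ) < r := hr
    have hnr := hnorm r hr0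
    rw [hz, hnr]
    by_cases hcase : r ≤ ρ
    · rw [if_pos hcase, if_pos hcase, real_inner_smul_left, real_inner_smul_left,
        real_inner_comm]
      ring
    · rw [if_neg hcase, if_neg hcase, real_inner_smul_left, real_inner_smul_left,
        real_inner_comm]
      field_simp
  have hR2 : ∫ r in Ioi (0:ℝ), r ^ (N-1) * (g (r • (ω : EuclideanSpace ℝ (Fin N))) *
        φ (r • (ω : EuclideanSpace ℝ (Fin N))))
      = ∫ r in Ioi (0:ℝ), r ^ (N-1) * ((if r ≤ ρ then (N:ℝ)/ρ else ((N:ℝ)-1)/r) *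
          φ (r • (ω : EuclideanSpace ℝ (Fin N)))) := by
    refine setIntegral_congr_fun measurableSet_Ioi fun r hr => ?_
    have hr0 : (0:ℝ) < r := hr
    rw [hg, hnorm r hr0]
  rw [hL, hR2]
  refine oneD N hN ρ R hρ0 hρR _ _ hψd (hφc.comp (by fun_prop))
    ((hgradc.comp (by fun_prop)).inner continuous_const) (fun r hr => ?_) (fun r hr => ?_)
  · exact hφ0 _ (by rw [hnorm r (hR0'.trans_le hr)]; exact hr)
  · rw [hg0 _ (by rw [hnorm r (hR0'.trans_le hr)]; exact hr), inner_zero_left]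
end

section
/- Let f : [0,∞) → ℝ be continuously differentiable and increasing with f(0) > 0, and suppose there exists δ > 0 such that for every q ∈ (0,δ) one has lim_{s→∞} f(s)/s^q = ∞. Then lim_{p→1⁺} sup_{α ∈ [0,∞)} α^{p-1}/f(α) = 1/f(0). -/
/-!
Near `α = 0` the quotient `α ^ (p - 1) / f α` tends to `1 / f α` as `p → 1⁺`, and `1 / f α` is
arbitrarily close to `1 / f 0` for small `α > 0`; this gives the lower bound. For the upper bound,
fix `0 < q < δ` and `M ≥ 1` with `f s ≥ f 0 * s ^ q` for `s ≥ M`. For `p - 1 ≤ q` the quotient is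
then at most `M ^ (p - 1) / f 0` on `[0, M]` (monotonicity of `f`) and at most `1 / f 0` on
`[M, ∞)` (growth of `f`), and `M ^ (p - 1) / f 0 → 1 / f 0`.
-/

open Filter Set Topology

noncomputable def quotientSup (f : ℝ → ℝ) (p : ℝ) : ℝ :=
  sSup ((fun α => α ^ (p - 1) / f α) '' Ici 0)

lemma tendsto_rpow_sub_one_nhdsGT_one {t : ℝ} (ht : t ≠ 0) :
    Tendsto (fun p : ℝ => t ^ (p - 1)) (𝓝[>] 1) (𝓝 1) := by
  have hsub : Tendsto (fun p : ℝ => p - 1) (𝓝[>] 1) (𝓝 0) := by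
    simpa using ((continuous_sub_right (1 : ℝ)).tendsto 1).mono_left nhdsWithin_le_nhds
  simpa [Function.comp_def] using (Real.continuousAt_const_rpow ht).tendsto.comp hsub

lemma exists_one_le_forall_mul_rpow_le {f : ℝ → ℝ} {q : ℝ}
    (h : Tendsto (fun s => f s / s ^ q) atTop atTop) (c : ℝ) :
    ∃ M, 1 ≤ M ∧ ∀ s ≥ M, c * s ^ q ≤ f s := by
  obtain ⟨M, hM⟩ := eventually_atTop.1 (h.eventually_ge_atTop c)
  refine ⟨max M 1, le_max_right _ _, fun s hs => ?_⟩
  have hspos : 0 < s ^ q := Real.rpow_pos_of_pos (by linarith [le_max_right M 1]) q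
  exact (le_div_iff₀ hspos).1 (hM s (le_of_max_le_left hs))

section UpperBound

variable {f : ℝ → ℝ} (hmono : MonotoneOn f (Ici 0)) (hf0 : 0 < f 0)
  {q M : ℝ} (hM : 1 ≤ M) (hgrowth : ∀ s ≥ M, f 0 * s ^ q ≤ f s)
include hmono hf0 hM hgrowth

lemma rpow_div_le_of_le_mul_rpow {r α : ℝ} (hr : 0 ≤ r) (hrq : r ≤ q) (hα : 0 ≤ α) :
    α ^ r / f α ≤ M ^ r / f 0 := by
  have hfα : f 0 ≤ f α := hmono self_mem_Ici hα hα
  rcases le_total α M with hαM | hMα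
  · exact div_le_div₀ (by positivity) (Real.rpow_le_rpow hα hαM hr) hf0 hfα
  · have hαq : 0 < α ^ q := Real.rpow_pos_of_pos (by linarith) q
    calc α ^ r / f α ≤ α ^ q / (f 0 * α ^ q) :=
          div_le_div₀ hαq.le (Real.rpow_le_rpow_of_exponent_le (by linarith) hrq)
            (by positivity) (hgrowth α hMα)
      _ = 1 / f 0 := by field_simp
      _ ≤ M ^ r / f 0 := by gcongr; exact Real.one_le_rpow hM hr

lemma bddAbove_quotient_image {p : ℝ} (hp : 1 ≤ p) (hpq : p ≤ 1 + q) :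
    BddAbove ((fun α => α ^ (p - 1) / f α) '' Ici 0) := by
  refine ⟨M ^ (p - 1) / f 0, ?_⟩
  rintro _ ⟨α, hα, rfl⟩
  exact rpow_div_le_of_le_mul_rpow hmono hf0 hM hgrowth (by linarith) (by linarith) hα

lemma quotientSup_le {p : ℝ} (hp : 1 ≤ p) (hpq : p ≤ 1 + q) :
    quotientSup f p ≤ M ^ (p - 1) / f 0 := by
  refine csSup_le (nonempty_Ici.image _) ?_
  rintro _ ⟨α, hα, rfl⟩
  exact rpow_div_le_of_le_mul_rpow hmono hf0 hM hgrowth (by linarith) (by linarith) hα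

end UpperBound

lemma eventually_lt_quotientSup {f : ℝ → ℝ} (hcont : ContinuousWithinAt f (Ici 0) 0)
    (hf0 : f 0 ≠ 0)
    (hbdd : ∀ᶠ p in 𝓝[>] (1 : ℝ), BddAbove ((fun α => α ^ (p - 1) / f α) '' Ici 0))
    {a : ℝ} (ha : a < 1 / f 0) :
    ∀ᶠ p in 𝓝[>] (1 : ℝ), a < quotientSup f p := by
  have hinv : Tendsto (fun t => 1 / f t) (𝓝[>] 0) (𝓝 (1 / f 0)) :=
    tendsto_const_nhds.div (hcont.mono Ioi_subset_Ici_self) hf0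
  obtain ⟨t, hta, ht⟩ :=
    ((tendsto_order.1 hinv).1 a ha |>.and self_mem_nhdsWithin).exists
  have hquot : Tendsto (fun p : ℝ => t ^ (p - 1) / f t) (𝓝[>] 1) (𝓝 (1 / f t)) :=
    (tendsto_rpow_sub_one_nhdsGT_one (ne_of_gt ht)).div_const _
  filter_upwards [(tendsto_order.1 hquot).1 a hta, hbdd] with p hap hp
  exact hap.trans_le (le_csSup hp (mem_image_of_mem _ (mem_Ici.2 (le_of_lt ht))))

/-- If `f` is `C¹`, increasing on `[0,∞)` with `f 0 > 0`, and `f(s)/s^q → ∞` for all small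
`q > 0`, then `sup_{α ≥ 0} α^(p-1)/f(α) → 1/f(0)` as `p → 1⁺`. -/
theorem limit_sup_quotient (f : ℝ → ℝ)
    (hf : ContDiffOn ℝ 1 f (Set.Ici 0))
    (hmono : StrictMonoOn f (Set.Ici 0))
    (hf0 : 0 < f 0)
    (δ : ℝ) (hδ : 0 < δ)
    (hsuper : ∀ q ∈ Set.Ioo (0 : ℝ) δ,
      Tendsto (fun s => f s / s ^ q) atTop atTop) :
    Tendsto (fun p : ℝ => sSup ((fun α => α ^ (p - 1) / f α) '' Set.Ici 0))
      (nhdsWithin 1 (Set.Ioi 1)) (nhds (1 / f 0)) := by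
  obtain ⟨M, hM, hgrowth⟩ :=
    exists_one_le_forall_mul_rpow_le (hsuper (δ / 2) ⟨by positivity, by linarith⟩) (f 0)
  have hnear : ∀ᶠ p in 𝓝[>] (1 : ℝ), p ∈ Ioc 1 (1 + δ / 2) := Ioc_mem_nhdsGT (by linarith)
  change Tendsto (quotientSup f) _ _
  refine tendsto_order.2 ⟨fun a ha => ?_, fun b hb => ?_⟩
  · refine eventually_lt_quotientSup (hf.continuousOn 0 self_mem_Ici) hf0.ne' ?_ ha
    exact hnear.mono fun p hp =>
      bddAbove_quotient_image hmono.monotoneOn hf0 hM hgrowth hp.1.le hp.2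
  · have hbound : Tendsto (fun p : ℝ => M ^ (p - 1) / f 0) (𝓝[>] 1) (𝓝 (1 / f 0)) :=
      (tendsto_rpow_sub_one_nhdsGT_one (by linarith)).div_const _
    filter_upwards [(tendsto_order.1 hbound).2 b hb, hnear] with p hpb hp
    exact (quotientSup_le hmono.monotoneOn hf0 hM hgrowth hp.1.le hp.2).trans_lt hpb
end

section
/- Let N ≥ 1 be a natural number, p > 1, λ > 0, let f : [0,∞) → (0,∞) be continuous and increasing, and let v : [0,1] → [0,∞) be continuous and satisfy v(r) = ∫_r^1 ( (λ/t^{N-1}) ∫_0^t s^{N-1} f(v(s)) ds )^{1/(p-1)} dt for every r ∈ [0,1]. Set α = v(0). Then v is nonincreasing (so v(s) ≤ α for all s ∈ [0,1]), and N·(p/(p-1))^{p-1}·α^{p-1}/f(α) ≤ λ ≤ N·(p/(p-1))^{p-1}·α^{p-1}/f(0). -/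
/-!
Write `F t = t^(1-N) ∫_0^t s^(N-1) f(v s) ds` (`radialFlux N (f ∘ v)`), so that
`v r = ∫_r^1 (λ F t)^(1/(p-1)) dt`. The integrand is nonnegative, hence `v` is nonincreasing
and `f 0 ≤ f (v s) ≤ f α` on `[0,1]`. Comparing `f ∘ v` with these constants squeezes `F t`
between `f 0 · t / N` and `f α · t / N`, and since
`∫_0^1 (K t)^(1/(p-1)) dt = (p-1)/p · K^(1/(p-1))`, evaluating the equation at `r = 0` turns
the two comparisons into the two bounds on `λ`.
-/

open Set MeasureTheory Filter Topology

noncomputable def radialFlux (N : ℕ) (φ : ℝ → ℝ) (t : ℝ) : ℝ :=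
  (∫ s in (0 : ℝ)..t, s ^ (N - 1) * φ s) / t ^ (N - 1)

section RadialFlux

variable {N : ℕ} {φ : ℝ → ℝ} {c t : ℝ}

theorem integral_pow_pred (hN : 1 ≤ N) (t : ℝ) :
    ∫ s in (0 : ℝ)..t, s ^ (N - 1) = t ^ N / N := by
  rw [integral_pow, Nat.sub_add_cancel hN, zero_pow (by omega), sub_zero, Nat.cast_sub hN,
    Nat.cast_one, sub_add_cancel]

theorem integral_pow_pred_mul_le (hN : 1 ≤ N) (ht : 0 ≤ t) (hφ : ContinuousOn φ (Icc 0 t))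
    (hle : ∀ s ∈ Icc 0 t, φ s ≤ c) :
    ∫ s in (0 : ℝ)..t, s ^ (N - 1) * φ s ≤ c * t ^ N / N :=
  calc ∫ s in (0 : ℝ)..t, s ^ (N - 1) * φ s ≤ ∫ s in (0 : ℝ)..t, s ^ (N - 1) * c :=
        intervalIntegral.integral_mono_on ht
          (((continuous_pow _).continuousOn.mul hφ).intervalIntegrable_of_Icc ht)
          (((continuous_pow _).mul continuous_const).intervalIntegrable _ _)
          fun s hs => mul_le_mul_of_nonneg_left (hle s hs) (pow_nonneg hs.1 _)
    _ = c * t ^ N / N := by rw [intervalIntegral.integral_mul_const, integral_pow_pred hN]; ring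

theorem le_integral_pow_pred_mul (hN : 1 ≤ N) (ht : 0 ≤ t) (hφ : ContinuousOn φ (Icc 0 t))
    (hle : ∀ s ∈ Icc 0 t, c ≤ φ s) :
    c * t ^ N / N ≤ ∫ s in (0 : ℝ)..t, s ^ (N - 1) * φ s :=
  calc c * t ^ N / N = ∫ s in (0 : ℝ)..t, s ^ (N - 1) * c := by
        rw [intervalIntegral.integral_mul_const, integral_pow_pred hN]; ring
    _ ≤ ∫ s in (0 : ℝ)..t, s ^ (N - 1) * φ s :=
        intervalIntegral.integral_mono_on ht
          (((continuous_pow _).mul continuous_const).intervalIntegrable _ _)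
          (((continuous_pow _).continuousOn.mul hφ).intervalIntegrable_of_Icc ht)
          fun s hs => mul_le_mul_of_nonneg_left (hle s hs) (pow_nonneg hs.1 _)

theorem pow_div_pow_pred (hN : 1 ≤ N) (ht : t ≠ 0) : t ^ N / t ^ (N - 1) = t := by
  rw [← Nat.sub_add_cancel hN, pow_succ, Nat.add_sub_cancel,
    mul_div_cancel_left₀ _ (pow_ne_zero _ ht)]

theorem radialFlux_le (hN : 1 ≤ N) (hφ : ContinuousOn φ (Icc 0 1))
    (hle : ∀ s ∈ Icc 0 1, φ s ≤ c) (ht : t ∈ Icc 0 1) :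
    radialFlux N φ t ≤ c / N * t := by
  rcases ht.1.eq_or_lt with rfl | ht0
  · simp [radialFlux]
  calc radialFlux N φ t ≤ c * t ^ N / N / t ^ (N - 1) :=
        div_le_div_of_nonneg_right (integral_pow_pred_mul_le hN ht.1
          (hφ.mono (Icc_subset_Icc_right ht.2)) fun s hs => hle s ⟨hs.1, hs.2.trans ht.2⟩)
          (by positivity)
    _ = c / N * t := by
        rw [div_right_comm _ (N : ℝ), mul_div_assoc c (t ^ N), pow_div_pow_pred hN ht0.ne']; ring

theorem le_radialFlux (hN : 1 ≤ N) (hφ : ContinuousOn φ (Icc 0 1))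
    (hle : ∀ s ∈ Icc 0 1, c ≤ φ s) (ht : t ∈ Icc 0 1) :
    c / N * t ≤ radialFlux N φ t := by
  rcases ht.1.eq_or_lt with rfl | ht0
  · simp [radialFlux]
  calc c / N * t = c * t ^ N / N / t ^ (N - 1) := by
        rw [div_right_comm _ (N : ℝ), mul_div_assoc c (t ^ N), pow_div_pow_pred hN ht0.ne']; ring
    _ ≤ radialFlux N φ t :=
        div_le_div_of_nonneg_right (le_integral_pow_pred_mul hN ht.1
          (hφ.mono (Icc_subset_Icc_right ht.2)) fun s hs => hle s ⟨hs.1, hs.2.trans ht.2⟩)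
          (by positivity)

theorem continuousOn_radialFlux (hN : 1 ≤ N) (hφ : ContinuousOn φ (Icc 0 1)) :
    ContinuousOn (radialFlux N φ) (Icc 0 1) := by
  intro t ht
  rcases ht.1.eq_or_lt with rfl | ht0
  · obtain ⟨C, hC⟩ := isCompact_Icc.exists_bound_of_continuousOn hφ
    have hbound : ∀ s ∈ Icc (0 : ℝ) 1, ‖radialFlux N φ s‖ ≤ C / N * s := fun s hs => by
      rw [Real.norm_eq_abs, abs_le, ← neg_mul, ← neg_div]
      exact ⟨le_radialFlux hN hφ (fun x hx => (abs_le.mp (hC x hx)).1) hs,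
        radialFlux_le hN hφ (fun x hx => (abs_le.mp (hC x hx)).2) hs⟩
    have hlim : Tendsto (fun s : ℝ => C / N * s) (𝓝[Icc 0 1] 0) (𝓝 0) :=
      tendsto_nhdsWithin_of_tendsto_nhds ((continuous_const_mul (C / N)).tendsto' 0 0 (mul_zero _))
    simpa [ContinuousWithinAt, radialFlux] using
      squeeze_zero_norm' (eventually_nhdsWithin_of_forall hbound) hlim
  · have hint : IntegrableOn (fun s => s ^ (N - 1) * φ s) (uIcc 0 1) := by
      rw [uIcc_of_le zero_le_one]
      exact ((continuous_pow _).continuousOn.mul hφ).integrableOn_Icc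
    have hprim : ContinuousOn (fun t => ∫ s in (0 : ℝ)..t, s ^ (N - 1) * φ s) (Icc 0 1) := by
      simpa only [uIcc_of_le zero_le_one] using
        intervalIntegral.continuousOn_primitive_interval hint
    exact (hprim t ht).div (continuous_pow _).continuousWithinAt (pow_ne_zero _ ht0.ne')

end RadialFlux

theorem antitoneOn_integral_of_nonneg {g : ℝ → ℝ} {a b : ℝ} (hg : IntegrableOn g (Icc a b))
    (hnn : ∀ t ∈ Icc a b, 0 ≤ g t) : AntitoneOn (fun r => ∫ t in r..b, g t) (Icc a b) := by
  intro r₁ hr₁ r₂ hr₂ hr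
  have hb : b ∈ Icc a b := right_mem_Icc.mpr (hr₁.1.trans hr₁.2)
  refine intervalIntegral.integral_mono_interval hr hr₂.2 le_rfl ?_
    (hg.mono_set (uIcc_subset_Icc hr₁ hb)).intervalIntegrable
  refine (ae_restrict_iff' measurableSet_Ioc).mpr (ae_of_all _ fun t ht => hnn t ?_)
  exact ⟨hr₁.1.trans ht.1.le, ht.2⟩

section RpowComparison

variable {p K : ℝ} {b : ℝ → ℝ}

theorem integral_mul_rpow_one_div (hp : 1 < p) (hK : 0 ≤ K) :
    ∫ t in (0 : ℝ)..1, (K * t) ^ (1 / (p - 1)) = (p - 1) / p * K ^ (1 / (p - 1)) := by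
  have hp1 : 0 < p - 1 := sub_pos.mpr hp
  have hq1 : 1 / (p - 1) + 1 = p / (p - 1) := by field_simp; ring
  rw [intervalIntegral.integral_congr fun t ht =>
      Real.mul_rpow hK (by rw [uIcc_of_le zero_le_one] at ht; exact ht.1),
    intervalIntegral.integral_const_mul, integral_rpow (Or.inl (by linarith [one_div_pos.mpr hp1])),
    hq1, Real.one_rpow, Real.zero_rpow (by positivity), sub_zero, one_div_div, mul_comm]

theorem rpow_mul_integral_rpow_le (hp : 1 < p) (hK : 0 ≤ K)
    (hb : IntervalIntegrable (fun t => b t ^ (1 / (p - 1))) volume 0 1)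
    (hb0 : ∀ t ∈ Icc (0 : ℝ) 1, 0 ≤ b t) (hle : ∀ t ∈ Icc (0 : ℝ) 1, b t ≤ K * t) :
    (p / (p - 1)) ^ (p - 1) * (∫ t in (0 : ℝ)..1, b t ^ (1 / (p - 1))) ^ (p - 1) ≤ K := by
  have hp1 : 0 < p - 1 := sub_pos.mpr hp
  have hq : 0 < 1 / (p - 1) := one_div_pos.mpr hp1
  have hcomp : ∫ t in (0 : ℝ)..1, b t ^ (1 / (p - 1)) ≤ (p - 1) / p * K ^ (1 / (p - 1)) :=
    (intervalIntegral.integral_mono_on zero_le_one hb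
      (((continuous_const_mul K).rpow_const fun _ => Or.inr hq.le).intervalIntegrable _ _)
      fun t ht => Real.rpow_le_rpow (hb0 t ht) (hle t ht) hq.le).trans_eq
      (integral_mul_rpow_one_div hp hK)
  have hnn : 0 ≤ ∫ t in (0 : ℝ)..1, b t ^ (1 / (p - 1)) :=
    intervalIntegral.integral_nonneg zero_le_one fun t ht => Real.rpow_nonneg (hb0 t ht) _
  rw [← Real.mul_rpow (by positivity) hnn, ← Real.le_rpow_inv_iff_of_pos (by positivity) hK hp1,
    ← one_div]
  calc p / (p - 1) * ∫ t in (0 : ℝ)..1, b t ^ (1 / (p - 1))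
      ≤ p / (p - 1) * ((p - 1) / p * K ^ (1 / (p - 1))) := by gcongr
    _ = K ^ (1 / (p - 1)) := by field_simp

theorem le_rpow_mul_integral_rpow (hp : 1 < p) (hK : 0 ≤ K)
    (hb : IntervalIntegrable (fun t => b t ^ (1 / (p - 1))) volume 0 1)
    (hle : ∀ t ∈ Icc (0 : ℝ) 1, K * t ≤ b t) :
    K ≤ (p / (p - 1)) ^ (p - 1) * (∫ t in (0 : ℝ)..1, b t ^ (1 / (p - 1))) ^ (p - 1) := by
  have hp1 : 0 < p - 1 := sub_pos.mpr hp
  have hq : 0 < 1 / (p - 1) := one_div_pos.mpr hp1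
  have hcomp : (p - 1) / p * K ^ (1 / (p - 1)) ≤ ∫ t in (0 : ℝ)..1, b t ^ (1 / (p - 1)) :=
    (integral_mul_rpow_one_div hp hK).symm.trans_le <| intervalIntegral.integral_mono_on zero_le_one
      (((continuous_const_mul K).rpow_const fun _ => Or.inr hq.le).intervalIntegrable _ _)
      hb fun t ht => Real.rpow_le_rpow (mul_nonneg hK ht.1) (hle t ht) hq.le
  have hnn : 0 ≤ ∫ t in (0 : ℝ)..1, b t ^ (1 / (p - 1)) :=
    (by positivity : (0 : ℝ) ≤ (p - 1) / p * K ^ (1 / (p - 1))).trans hcomp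
  rw [← Real.mul_rpow (by positivity) hnn,
    ← Real.rpow_inv_le_iff_of_pos hK (by positivity) hp1, ← one_div]
  calc K ^ (1 / (p - 1)) = p / (p - 1) * ((p - 1) / p * K ^ (1 / (p - 1))) := by field_simp
    _ ≤ p / (p - 1) * ∫ t in (0 : ℝ)..1, b t ^ (1 / (p - 1)) := by gcongr

end RpowComparison

/-- A continuous solution `v` of the radial integral equation
`v r = ∫_r^1 ((λ/t^(N-1)) ∫_0^t s^(N-1) f(v s) ds)^(1/(p-1)) dt` on `[0,1]` is
nonincreasing and, with `α = v 0`, one has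
`N (p/(p-1))^(p-1) α^(p-1)/f(α) ≤ λ ≤ N (p/(p-1))^(p-1) α^(p-1)/f(0)`. -/
theorem radial_integral_equation_bounds (N : ℕ) (hN : 1 ≤ N) (p lam : ℝ)
    (hp : 1 < p) (hlam : 0 < lam)
    (f : ℝ → ℝ) (hfc : Continuous f) (hfpos : ∀ s, 0 ≤ s → 0 < f s)
    (hfmono : MonotoneOn f (Set.Ici 0))
    (v : ℝ → ℝ) (hvc : ContinuousOn v (Set.Icc 0 1))
    (hvnn : ∀ r ∈ Set.Icc (0 : ℝ) 1, 0 ≤ v r)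
    (hveq : ∀ r ∈ Set.Icc (0 : ℝ) 1,
      v r = ∫ t in r..(1 : ℝ),
        (lam / t ^ (N - 1) * ∫ s in (0 : ℝ)..t, s ^ (N - 1) * f (v s)) ^ (1 / (p - 1))) :
    AntitoneOn v (Set.Icc 0 1) ∧
    (N : ℝ) * (p / (p - 1)) ^ (p - 1) * (v 0) ^ (p - 1) / f (v 0) ≤ lam ∧
    lam ≤ (N : ℝ) * (p / (p - 1)) ^ (p - 1) * (v 0) ^ (p - 1) / f 0 := by
  have h01 : (0 : ℝ) ∈ Icc (0 : ℝ) 1 := left_mem_Icc.mpr zero_le_one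
  have hφ : ContinuousOn (f ∘ v) (Icc 0 1) := hfc.comp_continuousOn hvc
  set b : ℝ → ℝ := fun t => lam * radialFlux N (f ∘ v) t
  have hv : ∀ r ∈ Icc (0 : ℝ) 1, v r = ∫ t in r..1, b t ^ (1 / (p - 1)) := fun r hr => by
    simp only [hveq r hr, b, radialFlux, Function.comp_apply, div_mul_eq_mul_div, mul_div_assoc]
  have hbc : ContinuousOn (fun t => b t ^ (1 / (p - 1))) (Icc 0 1) :=
    (continuousOn_const.mul (continuousOn_radialFlux hN hφ)).rpow_const
      fun _ _ => Or.inr (one_div_pos.mpr (sub_pos.mpr hp)).le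
  have hf0 : ∀ s ∈ Icc (0 : ℝ) 1, f 0 ≤ f (v s) := fun s hs =>
    hfmono (mem_Ici.mpr le_rfl) (hvnn s hs) (hvnn s hs)
  have hK0 : 0 ≤ lam * (f 0 / N) := by have := hfpos 0 le_rfl; positivity
  have hb_ge : ∀ t ∈ Icc (0 : ℝ) 1, lam * (f 0 / N) * t ≤ b t := fun t ht =>
    (mul_assoc _ _ _).trans_le (mul_le_mul_of_nonneg_left (le_radialFlux hN hφ hf0 ht) hlam.le)
  have hb0 : ∀ t ∈ Icc (0 : ℝ) 1, 0 ≤ b t := fun t ht =>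
    (mul_nonneg hK0 ht.1).trans (hb_ge t ht)
  have hanti : AntitoneOn v (Icc 0 1) :=
    (antitoneOn_integral_of_nonneg hbc.integrableOn_Icc fun t ht =>
      Real.rpow_nonneg (hb0 t ht) _).congr fun r hr => (hv r hr).symm
  have hfα : ∀ s ∈ Icc (0 : ℝ) 1, f (v s) ≤ f (v 0) := fun s hs =>
    hfmono (hvnn s hs) (hvnn 0 h01) (hanti h01 hs hs.1)
  have hfα0 := hfpos _ (hvnn 0 h01)
  have hNpos : (0 : ℝ) < N := by exact_mod_cast hN
  have hlower := rpow_mul_integral_rpow_le hp (by positivity)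
    (hbc.intervalIntegrable_of_Icc zero_le_one) hb0 fun t ht =>
      (mul_le_mul_of_nonneg_left (radialFlux_le hN hφ hfα ht) hlam.le).trans_eq
        (mul_assoc _ _ _).symm
  have hupper := le_rpow_mul_integral_rpow hp hK0 (hbc.intervalIntegrable_of_Icc zero_le_one) hb_ge
  rw [← hv 0 h01] at hlower hupper
  refine ⟨hanti, ?_, ?_⟩
  · rw [div_le_iff₀ hfα0]
    rw [← mul_div_assoc, le_div_iff₀ hNpos] at hlower
    linarith
  · rw [le_div_iff₀ (hfpos 0 le_rfl)]
    rw [← mul_div_assoc, div_le_iff₀ hNpos] at hupper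
    linarith
end
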